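/- arXiv:1610.04850 — 7 statements merged into one kernel-verified Lean document; each statement's English description precedes it below -/
import Mathlib

section
/- Let N, M be natural numbers with M > N, let A be a real N×M matrix and B a real M×N matrix. For an index i ∈ {1,…,M}, let A₋ᵢ denote the N×(M−1) submatrix of A obtained by deleting the i-th column and B₋ᵢ the (M−1)×N submatrix of B obtained by deleting the i-th row. Then ∑_{i=1}^{M} det(A₋ᵢ B₋ᵢ) = (M − N) · det(A B). -/
open Matrix Finset

/-- Auxiliary: adding multiples of `u` to the columns in `s` does not change the
determinant of a matrix whose column `a ∉ s` has been replaced by `u`. -/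
private lemma aux_det_update (n : ℕ) (C : Matrix (Fin n) (Fin n) ℝ) (u v : Fin n → ℝ)
    (s : Finset (Fin n)) (a : Fin n) (ha : a ∉ s) :
    ((Matrix.of fun i j => C i j + if j ∈ s then v j * u i else 0).updateCol a u).det
      = (C.updateCol a u).det := by
  induction s using Finset.induction_on with
  | empty => simp only [Finset.notMem_empty, if_false, add_zero]; rfl
  | @insert b s hb ih =>
    have hab : a ≠ b := fun h => ha (h ▸ Finset.mem_insert_self b s)
    have has : a ∉ s := fun h => ha (Finset.mem_insert_of_mem h)
    have hM : (Matrix.of fun i j => C i j + if j ∈ insert b s then v j * u i else 0)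
        = (Matrix.of fun i j => C i j + if j ∈ s then v j * u i else 0).updateCol b
          ((fun i => C i b) + v b • u) := by
      ext i j
      by_cases hj : j = b
      · subst hj; simp [Matrix.updateCol_self, hb]
      · simp [Matrix.updateCol_ne hj, Finset.mem_insert, hj]
    rw [hM]
    set X := Matrix.of fun i j => C i j + if j ∈ s then v j * u i else 0 with hX
    have hcomm : (X.updateCol b ((fun i => C i b) + v b • u)).updateCol a u
        = ((X.updateCol a u).updateCol b ((fun i => C i b) + v b • u)) := by
      ext i j
      by_cases hja : j = a <;> by_cases hjb : j = b <;>
        simp_all [Matrix.updateCol_apply]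
    rw [hcomm, Matrix.det_updateCol_add, Matrix.det_updateCol_smul]
    have hzero : (((X.updateCol a u).updateCol b u)).det = 0 := by
      apply Matrix.det_zero_of_column_eq hab
      intro k
      simp [Matrix.updateCol_apply, hab.symm]
    have hback : (X.updateCol a u).updateCol b (fun i => C i b)
        = X.updateCol a u := by
      ext i j
      by_cases hjb : j = b <;>
        simp_all [Matrix.updateCol_apply, hab.symm, X, hb]
    rw [hzero, hback, ih has]
    ring

/-- Multilinear expansion: determinant after adding `v j • u` to the columns in `s`. -/
private lemma aux_det_expand (n : ℕ) (C : Matrix (Fin n) (Fin n) ℝ) (u v : Fin n → ℝ)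
    (s : Finset (Fin n)) :
    (Matrix.of fun i j => C i j + if j ∈ s then v j * u i else 0).det
      = C.det + ∑ j ∈ s, v j * (C.updateCol j u).det := by
  induction s using Finset.induction_on with
  | empty => simp only [Finset.notMem_empty, if_false, add_zero, Finset.sum_empty]; rfl
  | @insert a s ha ih =>
    have hM : (Matrix.of fun i j => C i j + if j ∈ insert a s then v j * u i else 0)
        = (Matrix.of fun i j => C i j + if j ∈ s then v j * u i else 0).updateCol a
          ((fun i => C i a) + v a • u) := by
      ext i j
      by_cases hj : j = a
      · subst hj; simp [Matrix.updateCol_self, ha]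
      · simp [Matrix.updateCol_ne hj, Finset.mem_insert, hj]
    rw [hM, Matrix.det_updateCol_add, Matrix.det_updateCol_smul]
    have hback : (Matrix.of fun i j =>
          C i j + if j ∈ s then v j * u i else 0).updateCol a (fun i => C i a)
        = Matrix.of fun i j => C i j + if j ∈ s then v j * u i else 0 := by
      ext i j
      rcases eq_or_ne j a with rfl | hja
      · rw [Matrix.updateCol_self]; simp [ha]
      · rw [Matrix.updateCol_ne hja]
    rw [hback, ih, aux_det_update n C u v s a ha, Finset.sum_insert ha]
    ring

/-- Matrix determinant lemma, subtraction form. -/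
private lemma det_sub_rank_one (n : ℕ) (C : Matrix (Fin n) (Fin n) ℝ) (u v : Fin n → ℝ) :
    (Matrix.of fun i j => C i j - u i * v j).det
      = C.det - ∑ j, v j * (C.updateCol j u).det := by
  have h := aux_det_expand n C u (fun j => -v j) Finset.univ
  simp only [Finset.mem_univ, if_true] at h
  have h2 : (Matrix.of fun i j => C i j - u i * v j)
      = Matrix.of fun i j => C i j + (-v j) * u i := by
    ext i j; simp only [Matrix.of_apply]; ring
  rw [h2, h, sub_eq_add_neg, ← Finset.sum_neg_distrib]
  congr 1
  apply Finset.sum_congr rfl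
  intro j _
  ring

/-- Cauchy–Binet summation identity: for `A : N × (M+1)`, `B : (M+1) × N` with
`M + 1 > N`, summing `det (A₋ᵢ B₋ᵢ)` over all deleted indices `i` gives
`(M + 1 - N) · det (A B)`. -/
theorem sum_det_delete_eq (N M : ℕ) (hNM : N < M + 1)
    (A : Matrix (Fin N) (Fin (M + 1)) ℝ) (B : Matrix (Fin (M + 1)) (Fin N) ℝ) :
    ∑ i : Fin (M + 1),
        ((A.submatrix id i.succAbove) * (B.submatrix i.succAbove id)).det
      = ((M + 1 : ℝ) - N) * (A * B).det := by
  set C := A * B with hC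
  have key : ∀ i : Fin (M + 1),
      (A.submatrix id i.succAbove) * (B.submatrix i.succAbove id)
        = Matrix.of fun j k => C j k - (fun r => A r i) j * (B i) k := by
    intro i
    ext j k
    simp only [Matrix.mul_apply, Matrix.submatrix_apply, id_eq, Matrix.of_apply, hC]
    rw [Fin.sum_univ_succAbove (fun l => A j l * B l k) i]
    ring
  simp_rw [key, det_sub_rank_one]
  rw [Finset.sum_sub_distrib, Finset.sum_const, Finset.card_univ, Fintype.card_fin]
  have swap : ∑ i : Fin (M + 1), ∑ j, B i j * (C.updateCol j fun r => A r i).det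
      = ∑ j : Fin N, ∑ i : Fin (M + 1), B i j * (C.updateCol j fun r => A r i).det :=
    Finset.sum_comm
  rw [swap]
  have inner : ∀ j : Fin N,
      ∑ i : Fin (M + 1), B i j * (C.updateCol j fun r => A r i).det = C.det := by
    intro j
    have hlin : ∑ i : Fin (M + 1), B i j • Matrix.cramer C (fun r => A r i)
        = Matrix.cramer C (∑ i : Fin (M + 1), B i j • fun r => A r i) := by
      rw [map_sum]
      simp_rw [_root_.map_smul]
    have hcol : (∑ i : Fin (M + 1), B i j • fun r => A r i) = fun r => C r j := by
      funext r
      simp [hC, Matrix.mul_apply, mul_comm]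
    have := congrFun hlin j
    simp only [Finset.sum_apply, Pi.smul_apply, smul_eq_mul, Matrix.cramer_apply] at this
    rw [this, hcol, Matrix.updateCol_eq_self]
  simp_rw [inner]
  rw [Finset.sum_const, Finset.card_univ, Fintype.card_fin]
  simp [nsmul_eq_mul]
  ring
end

section
/- Let N, M be natural numbers with M > N, let A be a real N×M matrix and B a real M×N matrix. For an index i ∈ {1,…,M}, let A₋ᵢ denote the N×(M−1) submatrix of A obtained by deleting the i-th column and B₋ᵢ the (M−1)×N submatrix of B obtained by deleting the i-th row. Then det(A B) ≤ (M/(M−N)) · max_{1≤i≤M} det(A₋ᵢ B₋ᵢ). -/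
/-!
Deleting the `i`-th column of `A` and row of `B` removes the rank-one term `aᵢ bᵢᵀ` from
`A * B = ∑ᵢ aᵢ bᵢᵀ`. By the matrix determinant lemma
`det (X - u vᵀ) = det X - tr (adj X * u vᵀ)`, summing over `i` gives
`∑ᵢ det (A₋ᵢ B₋ᵢ) = (M + 1) det (A B) - tr (adj (A B) * A B) = (M + 1 - N) det (A B)`,
and the maximum of the `M + 1` summands is at least their average.
-/

open Matrix

namespace Matrix

variable {l m n : Type*}

theorem det_add_vecMulVec_of_isUnit [Fintype n] [DecidableEq n] {R : Type*} [CommRing R]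
    {X : Matrix n n R} (hX : IsUnit X.det) (u v : n → R) :
    (X + vecMulVec u v).det = X.det + v ⬝ᵥ (X.adjugate *ᵥ u) := by
  have hfactor : X + vecMulVec u v = X * (1 + vecMulVec (X⁻¹ *ᵥ u) v) := by
    rw [Matrix.mul_add, Matrix.mul_one, mul_vecMulVec, mulVec_mulVec, mul_nonsing_inv X hX,
      one_mulVec]
  rw [hfactor, det_mul, vecMulVec_eq Unit, det_one_add_replicateCol_mul_replicateRow,
    ← cramer_eq_adjugate_mulVec, ← det_smul_inv_mulVec_eq_cramer X u hX,
    dotProduct_smul, smul_eq_mul, mul_add, mul_one]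

/-- Both sides are continuous in `X`, and `X + t • 1` is invertible for all but finitely many `t`
(the roots of the characteristic polynomial of `-X`). -/
theorem det_add_vecMulVec [Fintype n] [DecidableEq n] (X : Matrix n n ℝ) (u v : n → ℝ) :
    (X + vecMulVec u v).det = X.det + v ⬝ᵥ (X.adjugate *ᵥ u) := by
  set Y : ℝ → Matrix n n ℝ := fun t => X + t • 1
  have hdet : ∀ t, (Y t).det = (-X).charpoly.eval t := fun t => by
    rw [eval_charpoly, sub_neg_eq_add, add_comm, scalar_apply, ← smul_one_eq_diagonal]
  have hsingular : {t | (Y t).det = 0}.Finite := by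
    simpa only [hdet, Polynomial.IsRoot.def] using
      Polynomial.finite_setOfPred_isRoot (charpoly_monic (-X)).ne_zero
  have hext : (fun t => (Y t + vecMulVec u v).det)
      = fun t => (Y t).det + v ⬝ᵥ ((Y t).adjugate *ᵥ u) :=
    Continuous.ext_on (dense_univ.sdiff_finite hsingular) (by fun_prop) (by fun_prop)
      fun t ht => det_add_vecMulVec_of_isUnit (isUnit_iff_ne_zero.2 ht.2) u v
  simpa [Y] using congrFun hext 0

theorem mul_eq_sum_vecMulVec {R : Type*} [Fintype m] [NonUnitalNonAssocSemiring R]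
    (A : Matrix l m R) (B : Matrix m n R) : A * B = ∑ i, vecMulVec (Aᵀ i) (B i) := by
  ext
  simp [mul_apply, vecMulVec_apply, sum_apply]

theorem sum_det_mul_sub_vecMulVec [Fintype n] [DecidableEq n] [Fintype m]
    (A : Matrix n m ℝ) (B : Matrix m n ℝ) :
    ∑ i, (A * B - vecMulVec (Aᵀ i) (B i)).det
      = (Fintype.card m - Fintype.card n) * (A * B).det := by
  have hterm : ∀ i, (A * B - vecMulVec (Aᵀ i) (B i)).det
      = (A * B).det - ((A * B).adjugate * vecMulVec (Aᵀ i) (B i)).trace := fun i => by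
    rw [sub_eq_add_neg, ← neg_vecMulVec, det_add_vecMulVec, mulVec_neg, dotProduct_neg,
      mul_vecMulVec, trace_vecMulVec, dotProduct_comm, ← sub_eq_add_neg]
  calc ∑ i, (A * B - vecMulVec (Aᵀ i) (B i)).det
      = Fintype.card m * (A * B).det - ((A * B).adjugate * (A * B)).trace := by
        simp only [hterm, Finset.sum_sub_distrib, Finset.sum_const, Finset.card_univ,
          nsmul_eq_mul, ← trace_sum, ← Finset.mul_sum, ← mul_eq_sum_vecMulVec]
    _ = (Fintype.card m - Fintype.card n) * (A * B).det := by
        rw [adjugate_mul, trace_smul, trace_one, smul_eq_mul]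
        ring

theorem submatrix_succAbove_mul_submatrix_succAbove {R : Type*} [Ring R] {k : ℕ}
    (A : Matrix l (Fin (k + 1)) R) (B : Matrix (Fin (k + 1)) n R) (i : Fin (k + 1)) :
    A.submatrix id i.succAbove * B.submatrix i.succAbove id
      = A * B - vecMulVec (Aᵀ i) (B i) := by
  ext
  simp [mul_apply, Fin.sum_univ_succAbove _ i, vecMulVec_apply]

end Matrix

/-- Lemma 1: for `A : N × (M+1)`, `B : (M+1) × N` with `M + 1 > N`,
`det (A B) ≤ (M+1)/((M+1) - N) · max_i det (A₋ᵢ B₋ᵢ)`. -/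
theorem det_mul_le_max_det_delete (N M : ℕ) (hNM : N < M + 1)
    (A : Matrix (Fin N) (Fin (M + 1)) ℝ) (B : Matrix (Fin (M + 1)) (Fin N) ℝ) :
    (A * B).det
      ≤ ((M + 1 : ℝ) / ((M + 1 : ℝ) - N)) *
        Finset.univ.sup' Finset.univ_nonempty
          (fun i : Fin (M + 1) =>
            ((A.submatrix id i.succAbove) * (B.submatrix i.succAbove id)).det) := by
  set d := fun i : Fin (M + 1) =>
    ((A.submatrix id i.succAbove) * (B.submatrix i.succAbove id)).det
  have hsum : ∑ i, d i = ((M + 1 : ℝ) - N) * (A * B).det := by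
    simpa [d, submatrix_succAbove_mul_submatrix_succAbove] using sum_det_mul_sub_vecMulVec A B
  have hle : ∑ i, d i ≤ (M + 1 : ℝ) * Finset.univ.sup' Finset.univ_nonempty d := by
    simpa using Finset.sum_le_card_nsmul Finset.univ d (Finset.univ.sup' Finset.univ_nonempty d)
      fun i _ => Finset.le_sup' d (Finset.mem_univ i)
  have hpos : (0 : ℝ) < (M + 1 : ℝ) - N := by
    rw [sub_pos]; exact_mod_cast hNM
  rw [div_mul_eq_mul_div, le_div_iff₀ hpos]
  linarith
end

section
/- Let Q be a real f×m matrix of rank f, let k : {1,…,L₀} → {1,…,m} be an injective choice of column indices with m ≥ L₀ ≥ f, and let S = Q(:,k) be the f×L₀ submatrix of Q formed by the columns indexed by k, with S Sᵀ invertible. Assume S is dominant in the following sense: for every column index i of Q and every j ∈ {1,…,L₀}, the matrix S⁽ʲ←ⁱ⁾ obtained from S by replacing its j-th column with the i-th column qᵢ of Q satisfies det(S⁽ʲ←ⁱ⁾ (S⁽ʲ←ⁱ⁾)ᵀ) ≤ det(S Sᵀ). Then for every column index i of Q not in the range of k, the least-norm coefficient vector cᵢ = Sᵀ(S Sᵀ)⁻¹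 qᵢ (which satisfies S cᵢ = qᵢ) obeys ‖cᵢ‖₂ ≤ √(f/(L₀ + 1 − f)). -/
/-!
Put `G = S Sᵀ`, `c = Sᵀ G⁻¹ qᵢ` and let `ℓⱼ = sⱼᵀ G⁻¹ sⱼ` be the leverages of the columns `sⱼ`
of `S`. Replacing `sⱼ` by `qᵢ` changes `G` by the rank-two update `qᵢ qᵢᵀ - sⱼ sⱼᵀ`, so the matrix
determinant lemma turns the volume ratio into `(1 + ‖c‖²)(1 - ℓⱼ) + cⱼ²`. Dominance bounds each
ratio by `1`; summing over `j`, with `∑ ℓⱼ = tr (Sᵀ G⁻¹ S) = f` and `∑ cⱼ² = ‖c‖²`, gives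
`(1 + ‖c‖²)(L₀ - f) + ‖c‖² ≤ L₀`, i.e. `‖c‖² (L₀ + 1 - f) ≤ f`.
-/

open Matrix

namespace Matrix

section CommRing

variable {R ι κ : Type*} [CommRing R]

theorem updateCol_mul_transpose_updateCol [Fintype κ] [DecidableEq κ] (S : Matrix ι κ R) (j : κ)
    (u : ι → R) :
    S.updateCol j u * (S.updateCol j u)ᵀ =
      S * Sᵀ + vecMulVec u u - vecMulVec (Sᵀ j) (Sᵀ j) := by
  ext p q
  simp only [mul_apply, transpose_apply, updateCol_apply, add_apply, sub_apply, vecMulVec_apply]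
  rw [← Finset.add_sum_erase _ _ (Finset.mem_univ j),
    ← Finset.add_sum_erase _ _ (Finset.mem_univ j),
    Finset.sum_congr rfl fun l hl => by
      rw [if_neg (Finset.ne_of_mem_erase hl), if_neg (Finset.ne_of_mem_erase hl)]]
  simp only [if_true]
  ring

variable [Fintype ι]

theorem of_mul_mul_transpose_of_apply {n : Type*} (a b : n → ι → R) (M : Matrix ι ι R)
    (t s : n) : (of a * M * (of b)ᵀ) t s = a t ⬝ᵥ M *ᵥ b s := by
  simp only [mul_apply, of_apply, transpose_apply, dotProduct, mulVec, Finset.sum_mul,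
    Finset.mul_sum, mul_assoc]
  exact Finset.sum_comm

theorem IsSymm.dotProduct_mulVec_comm {A : Matrix ι ι R} (hA : A.IsSymm) (u v : ι → R) :
    u ⬝ᵥ A *ᵥ v = v ⬝ᵥ A *ᵥ u := by
  rw [dotProduct_mulVec, ← mulVec_transpose, hA, dotProduct_comm]

variable [DecidableEq ι]

theorem det_add_vecMulVec_sub_vecMulVec {A : Matrix ι ι R} (hA : IsUnit A.det)
    (u v x y : ι → R) :
    (A + vecMulVec u v - vecMulVec x y).det =
      A.det * ((1 + v ⬝ᵥ A⁻¹ *ᵥ u) * (1 - y ⬝ᵥ A⁻¹ *ᵥ x) +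
        (v ⬝ᵥ A⁻¹ *ᵥ x) * (y ⬝ᵥ A⁻¹ *ᵥ u)) := by
  have hUV : vecMulVec u v - vecMulVec x y = (of ![u, x])ᵀ * of ![v, -y] := by
    ext p q
    simp [vecMulVec_apply, mul_apply, Fin.sum_univ_two, sub_eq_add_neg]
  rw [add_sub_assoc, hUV, det_add_mul _ _ hA, det_fin_two]
  simp only [add_apply, one_apply_eq, one_apply_ne zero_ne_one, one_apply_ne one_ne_zero,
    of_mul_mul_transpose_of_apply, cons_val_zero, cons_val_one, neg_dotProduct]
  ring

variable [Fintype κ] (S : Matrix ι κ R)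

noncomputable def leastNormCoef (u : ι → R) : κ → R := (Sᵀ * (S * Sᵀ)⁻¹) *ᵥ u

/-- The diagonal of the orthogonal projection `Sᵀ (S Sᵀ)⁻¹ S` onto the row space of `S`. -/
noncomputable def leverage (j : κ) : R := Sᵀ j ⬝ᵥ (S * Sᵀ)⁻¹ *ᵥ Sᵀ j

variable {S}

theorem leastNormCoef_apply (u : ι → R) (j : κ) :
    leastNormCoef S u j = Sᵀ j ⬝ᵥ (S * Sᵀ)⁻¹ *ᵥ u := by
  rw [leastNormCoef, ← mulVec_mulVec]
  simp only [mulVec]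

theorem dotProduct_self_leastNormCoef (hS : IsUnit (S * Sᵀ).det) (u : ι → R) :
    leastNormCoef S u ⬝ᵥ leastNormCoef S u = u ⬝ᵥ (S * Sᵀ)⁻¹ *ᵥ u := by
  rw [leastNormCoef, ← mulVec_mulVec, dotProduct_mulVec, vecMul_transpose, mulVec_mulVec,
    mulVec_mulVec, mul_nonsing_inv _ hS, one_mulVec, dotProduct_comm]

theorem sum_leverage (hS : IsUnit (S * Sᵀ).det) : ∑ j, leverage S j = Fintype.card ι := by
  calc ∑ j, leverage S j = (Sᵀ * ((S * Sᵀ)⁻¹ * S)).trace := by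
        simp only [leverage, trace, diag_apply, mul_apply, dotProduct, mulVec, transpose_apply,
          Finset.mul_sum]
    _ = ((S * Sᵀ)⁻¹ * (S * Sᵀ)).trace := by rw [trace_mul_comm, Matrix.mul_assoc]
    _ = Fintype.card ι := by rw [nonsing_inv_mul _ hS, trace_one]

theorem det_updateCol_mul_transpose_updateCol [DecidableEq κ] (hS : IsUnit (S * Sᵀ).det)
    (j : κ) (u : ι → R) :
    (S.updateCol j u * (S.updateCol j u)ᵀ).det = (S * Sᵀ).det *
      ((1 + leastNormCoef S u ⬝ᵥ leastNormCoef S u) * (1 - leverage S j) +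
        leastNormCoef S u j ^ 2) := by
  have hsymm : u ⬝ᵥ (S * Sᵀ)⁻¹ *ᵥ Sᵀ j = Sᵀ j ⬝ᵥ (S * Sᵀ)⁻¹ *ᵥ u :=
    IsSymm.dotProduct_mulVec_comm (IsSymm.inv (transpose_mul S Sᵀ)) u (Sᵀ j)
  rw [updateCol_mul_transpose_updateCol, det_add_vecMulVec_sub_vecMulVec hS, hsymm,
    dotProduct_self_leastNormCoef hS, leastNormCoef_apply, leverage, sq]

end CommRing

theorem det_mul_transpose_self_pos {ι κ : Type*} [Fintype ι] [DecidableEq ι] [Fintype κ]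
    {S : Matrix ι κ ℝ} (hS : IsUnit (S * Sᵀ).det) : 0 < (S * Sᵀ).det := by
  have hpsd := posSemidef_self_mul_conjTranspose S
  rw [conjTranspose_eq_transpose_of_trivial] at hpsd
  exact hpsd.det_nonneg.lt_of_ne' hS.ne_zero

end Matrix

/-- The left side of `h` is the factor in `det_updateCol_mul_transpose_updateCol`, with `ℓ` the
leverages and `c` the least-norm coefficients. -/
theorem sum_sq_le_div_of_forall_le_one {κ : Type*} [Fintype κ] {f : ℝ} {ℓ c : κ → ℝ}
    (hf : f ≤ Fintype.card κ) (hℓ : ∑ j, ℓ j = f)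
    (h : ∀ j, (1 + ∑ j, c j ^ 2) * (1 - ℓ j) + c j ^ 2 ≤ 1) :
    ∑ j, c j ^ 2 ≤ f / (Fintype.card κ + 1 - f) := by
  have hsum := Finset.sum_le_sum fun j (_ : j ∈ Finset.univ) => h j
  simp only [Finset.sum_add_distrib, ← Finset.mul_sum, Finset.sum_sub_distrib, hℓ,
    Finset.sum_const, Finset.card_univ, nsmul_eq_mul, mul_one] at hsum
  rw [le_div_iff₀ (by linarith)]
  linear_combination hsum

theorem norm_leastNormCoef_le_of_dominant_general
    (f m L₀ : ℕ) (hfL : f ≤ L₀)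
    (Q : Matrix (Fin f) (Fin m) ℝ)
    (S : Matrix (Fin f) (Fin L₀) ℝ)
    (hinv : IsUnit (S * Sᵀ))
    (hdom : ∀ (i : Fin m) (j : Fin L₀),
      ((S.updateCol j (fun a => Q a i)) * (S.updateCol j (fun a => Q a i))ᵀ).det
        ≤ (S * Sᵀ).det)
    (i : Fin m)
    (c : Fin L₀ → ℝ) (hc : c = (Sᵀ * (S * Sᵀ)⁻¹).mulVec (fun a => Q a i)) :
    Real.sqrt (∑ j, c j ^ 2) ≤ Real.sqrt ((f : ℝ) / ((L₀ : ℝ) + 1 - f)) := by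
  have hS : IsUnit (S * Sᵀ).det := (isUnit_iff_isUnit_det _).mp hinv
  have hcoef : c = leastNormCoef S (fun a => Q a i) := hc
  have hnorm : c ⬝ᵥ c = ∑ j, c j ^ 2 := by simp only [dotProduct, sq]
  have hratio : ∀ j, (1 + ∑ j, c j ^ 2) * (1 - leverage S j) + c j ^ 2 ≤ 1 := fun j => by
    have h := hdom i j
    rw [det_updateCol_mul_transpose_updateCol hS, ← hcoef, hnorm] at h
    exact le_of_mul_le_mul_left (by rwa [mul_one]) (det_mul_transpose_self_pos hS)
  have hbound := sum_sq_le_div_of_forall_le_one (f := f) (by simpa using hfL)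
    (by simpa using sum_leverage hS) hratio
  rw [Fintype.card_fin] at hbound
  exact Real.sqrt_le_sqrt hbound

/-- Theorem 1: if `S = Q(:,k)` is a dominant `f × L₀` submatrix of a rank-`f`
matrix `Q`, then for any column `qᵢ` of `Q` outside the seed set, the
least-norm coefficient vector `cᵢ = Sᵀ (S Sᵀ)⁻¹ qᵢ` satisfies
`‖cᵢ‖₂ ≤ √(f / (L₀ + 1 - f))`. -/
theorem norm_leastNormCoef_le_of_dominant
    (f m L₀ : ℕ) (hfL : f ≤ L₀) (hLm : L₀ ≤ m)
    (Q : Matrix (Fin f) (Fin m) ℝ) (hQ : Q.rank = f)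
    (k : Fin L₀ → Fin m) (hk : Function.Injective k)
    (S : Matrix (Fin f) (Fin L₀) ℝ) (hS : S = Q.submatrix id k)
    (hinv : IsUnit (S * Sᵀ))
    (hdom : ∀ (i : Fin m) (j : Fin L₀),
      ((S.updateCol j (fun a => Q a i)) * (S.updateCol j (fun a => Q a i))ᵀ).det
        ≤ (S * Sᵀ).det)
    (i : Fin m) (hi : i ∉ Set.range k)
    (c : Fin L₀ → ℝ) (hc : c = (Sᵀ * (S * Sᵀ)⁻¹).mulVec (fun a => Q a i)) :
    Real.sqrt (∑ j, c j ^ 2) ≤ Real.sqrt ((f : ℝ) / ((L₀ : ℝ) + 1 - f)) :=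
  norm_leastNormCoef_le_of_dominant_general f m L₀ hfL Q S hinv hdom i c hc
end

section
/- Let S be a real f×L matrix such that S Sᵀ is invertible, and let c ∈ ℝ^L be a vector lying in the column space of Sᵀ (i.e., c = Sᵀ y for some y ∈ ℝ^f). Let [S, Sc] denote the f×(L+1) matrix obtained by appending the column Sc to S. Then det([S,Sc][S,Sc]ᵀ) = det(S Sᵀ) · (1 + ‖c‖₂²); equivalently, Rectvol([S,Sc]) = Rectvol(S) · √(1 + ‖c‖₂²). -/
/-!
Write `G = S Sᵀ` and `c = Sᵀ y`. The Gram matrix of `[S, Sc]` is the rank-one update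
`G + u uᵀ` of `G` with `u = S c = G y`, so it factors as `G (1 + y uᵀ)`, and the special case
`det (1 + y uᵀ) = 1 + uᵀ y` of the matrix determinant lemma gives the factor
`1 + yᵀ G y = 1 + ‖Sᵀ y‖² = 1 + ‖c‖²`.
-/

open Matrix

namespace Matrix

variable {m n α : Type*} [CommRing α]

theorem mul_transpose_eq_add_vecMulVec_of_last_col {k : ℕ} (T : Matrix m (Fin (k + 1)) α)
    (S : Matrix m (Fin k) α) (u : m → α) (hS : ∀ a j, T a j.castSucc = S a j)
    (hu : ∀ a, T a (Fin.last k) = u a) :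
    T * Tᵀ = S * Sᵀ + vecMulVec u u := by
  ext a b
  simp [mul_apply, Fin.sum_univ_castSucc, hS, hu, vecMulVec_apply]

variable [Fintype m]

theorem det_add_vecMulVec_mulVec [DecidableEq m] (A : Matrix m m α) (y v : m → α) :
    (A + vecMulVec (A *ᵥ y) v).det = A.det * (1 + v ⬝ᵥ y) := by
  rw [← mul_vecMulVec, ← mul_one_add A, det_mul, vecMulVec_eq Unit,
    det_one_add_replicateCol_mul_replicateRow]

theorem mul_transpose_mulVec_dotProduct [Fintype n] (A : Matrix m n α) (y : m → α) :
    ((A * Aᵀ) *ᵥ y) ⬝ᵥ y = (Aᵀ *ᵥ y) ⬝ᵥ (Aᵀ *ᵥ y) := by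
  rw [← mulVec_mulVec y A Aᵀ, dotProduct_comm, dotProduct_mulVec, mulVec_transpose]

end Matrix

theorem rectvol_append_col_general
    (f L : ℕ) (S : Matrix (Fin f) (Fin L) ℝ)
    (c : Fin L → ℝ) (hc : ∃ y : Fin f → ℝ, c = Sᵀ.mulVec y)
    (T : Matrix (Fin f) (Fin (L + 1)) ℝ)
    (hT : T = Matrix.of fun a b => Fin.lastCases (S.mulVec c a) (fun j => S a j) b) :
    (T * Tᵀ).det = (S * Sᵀ).det * (1 + ∑ j, c j ^ 2) ∧
      Real.sqrt (T * Tᵀ).det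
        = Real.sqrt (S * Sᵀ).det * Real.sqrt (1 + ∑ j, c j ^ 2) := by
  obtain ⟨y, rfl⟩ := hc
  have hgram : T * Tᵀ = S * Sᵀ + vecMulVec ((S * Sᵀ) *ᵥ y) ((S * Sᵀ) *ᵥ y) := by
    rw [← mulVec_mulVec]
    exact mul_transpose_eq_add_vecMulVec_of_last_col T S _ (by simp [hT]) (by simp [hT])
  have hdet : (T * Tᵀ).det = (S * Sᵀ).det * (1 + ∑ j, (Sᵀ *ᵥ y) j ^ 2) := by
    rw [hgram, det_add_vecMulVec_mulVec, mul_transpose_mulVec_dotProduct]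
    simp only [dotProduct, sq]
  exact ⟨hdet, by rw [hdet, Real.sqrt_mul' _ (by positivity)]⟩

/-- Equation (11): appending the column `S c` (with `c` in the row space of `S`,
i.e. the column space of `Sᵀ`) multiplies `det (S Sᵀ)` by `1 + ‖c‖₂²`;
equivalently `Rectvol [S, Sc] = Rectvol S · √(1 + ‖c‖₂²)`. -/
theorem rectvol_append_col
    (f L : ℕ) (S : Matrix (Fin f) (Fin L) ℝ) (hinv : IsUnit (S * Sᵀ))
    (c : Fin L → ℝ) (hc : ∃ y : Fin f → ℝ, c = Sᵀ.mulVec y)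
    (T : Matrix (Fin f) (Fin (L + 1)) ℝ)
    (hT : T = Matrix.of fun a b => Fin.lastCases (S.mulVec c a) (fun j => S a j) b) :
    (T * Tᵀ).det = (S * Sᵀ).det * (1 + ∑ j, c j ^ 2) ∧
      Real.sqrt (T * Tᵀ).det
        = Real.sqrt (S * Sᵀ).det * Real.sqrt (1 + ∑ j, c j ^ 2) :=
  rectvol_append_col_general f L S c hc T hT
end

section
/- Let S be a real f×L matrix (f ≤ L) such that S Sᵀ is invertible, and let qᵢ, qⱼ ∈ ℝ^f be two column vectors with least-norm coefficient vectors cᵢ = Sᵀ(S Sᵀ)⁻¹ qᵢ and cⱼ = Sᵀ(S Sᵀ)⁻¹ qⱼ. Then det([S,qᵢ][S,qᵢ]ᵀ) ≤ det([S,qⱼ][S,qⱼ]ᵀ) if and only if ‖cᵢ‖₂ ≤ ‖cⱼ‖₂; in particular, among candidate columns, maximizing the rectangular volume of the extended matrix [S, q] is equivalent to maximizing the Euclidean norm of the least-norm coefficient vector of q. -/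
/-!
Appending a column `q` to `S` adds the rank-one term `q qᵀ` to the Gram matrix `M = S Sᵀ`, so by
the matrix determinant lemma `det ([S, q] [S, q]ᵀ) = det M · (1 + qᵀ M⁻¹ q)`. The quadratic form
`qᵀ M⁻¹ q` is exactly `‖c‖²` for the least-norm solution `c = Sᵀ M⁻¹ q`, and `det M > 0`, so
comparing volumes is comparing the norms of the coefficient vectors.
-/

open Matrix

namespace Matrix

variable {m n R : Type*}

def appendCol {k : ℕ} (S : Matrix m (Fin k) R) (q : m → R) : Matrix m (Fin (k + 1)) R :=
  of fun a b => Fin.lastCases (q a) (fun j => S a j) b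

theorem appendCol_mul_transpose [CommSemiring R] {k : ℕ} (S : Matrix m (Fin k) R) (q : m → R) :
    appendCol S q * (appendCol S q)ᵀ = S * Sᵀ + vecMulVec q q := by
  ext a b
  simp [appendCol, mul_apply, vecMulVec_apply, Fin.sum_univ_castSucc]

theorem det_add_vecMulVec_s6 [Fintype m] [DecidableEq m] [CommRing R] {A : Matrix m m R}
    (hA : IsUnit A.det) (u v : m → R) :
    (A + vecMulVec u v).det = A.det * (1 + v ⬝ᵥ A⁻¹ *ᵥ u) := by
  rw [vecMulVec_eq Unit, det_add_replicateCol_mul_replicateRow hA, ← replicateRow_vecMul,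
    dotProduct_mulVec, det_unique (n := Unit)]
  rfl

theorem det_appendCol_mul_transpose [Fintype m] [DecidableEq m] [CommRing R] {k : ℕ}
    {S : Matrix m (Fin k) R} (hS : IsUnit (S * Sᵀ)) (q : m → R) :
    (appendCol S q * (appendCol S q)ᵀ).det = (S * Sᵀ).det * (1 + q ⬝ᵥ (S * Sᵀ)⁻¹ *ᵥ q) := by
  rw [appendCol_mul_transpose, det_add_vecMulVec_s6 ((isUnit_iff_isUnit_det _).mp hS)]

theorem pinv_mulVec_dotProduct_self [Fintype m] [Fintype n] [DecidableEq m] [CommRing R]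
    {S : Matrix m n R} (hS : IsUnit (S * Sᵀ)) (q : m → R) :
    (Sᵀ * (S * Sᵀ)⁻¹) *ᵥ q ⬝ᵥ (Sᵀ * (S * Sᵀ)⁻¹) *ᵥ q = q ⬝ᵥ (S * Sᵀ)⁻¹ *ᵥ q := by
  have hsymm : (S * Sᵀ)⁻¹ᵀ = (S * Sᵀ)⁻¹ := by
    rw [transpose_nonsing_inv, transpose_mul, transpose_transpose]
  have hgram : (Sᵀ * (S * Sᵀ)⁻¹)ᵀ * (Sᵀ * (S * Sᵀ)⁻¹) = (S * Sᵀ)⁻¹ := by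
    rw [transpose_mul, transpose_transpose, hsymm, Matrix.mul_assoc, ← Matrix.mul_assoc S,
      mul_nonsing_inv _ ((isUnit_iff_isUnit_det _).mp hS), Matrix.mul_one]
  rw [dotProduct_mulVec, vecMul_mulVec, hgram, ← dotProduct_mulVec]

theorem det_mul_transpose_pos [Fintype m] [Fintype n] [DecidableEq m] {S : Matrix m n ℝ}
    (hS : IsUnit (S * Sᵀ)) :
    0 < (S * Sᵀ).det := by
  have hpsd : (S * Sᵀ).PosSemidef := by
    simpa using posSemidef_self_mul_conjTranspose S
  exact hpsd.det_nonneg.lt_of_ne ((isUnit_iff_isUnit_det _).mp hS).ne_zero.symm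

end Matrix

theorem det_append_le_iff_norm_coef_le_general
    (f L : ℕ) (S : Matrix (Fin f) (Fin L) ℝ) (hinv : IsUnit (S * Sᵀ))
    (qi qj : Fin f → ℝ)
    (ci cj : Fin L → ℝ)
    (hci : ci = (Sᵀ * (S * Sᵀ)⁻¹).mulVec qi)
    (hcj : cj = (Sᵀ * (S * Sᵀ)⁻¹).mulVec qj)
    (Ti Tj : Matrix (Fin f) (Fin (L + 1)) ℝ)
    (hTi : Ti = Matrix.of fun a b => Fin.lastCases (qi a) (fun j => S a j) b)
    (hTj : Tj = Matrix.of fun a b => Fin.lastCases (qj a) (fun j => S a j) b) :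
    (Ti * Tiᵀ).det ≤ (Tj * Tjᵀ).det ↔
      Real.sqrt (∑ a, ci a ^ 2) ≤ Real.sqrt (∑ a, cj a ^ 2) := by
  have hTi' : Ti = appendCol S qi := hTi
  have hTj' : Tj = appendCol S qj := hTj
  have hnorm : ∀ c : Fin L → ℝ, ∑ a, c a ^ 2 = c ⬝ᵥ c := fun c => by simp only [dotProduct, sq]
  rw [hTi', hTj', det_appendCol_mul_transpose hinv, det_appendCol_mul_transpose hinv,
    mul_le_mul_iff_right₀ (det_mul_transpose_pos hinv), add_le_add_iff_left,
    Real.sqrt_le_sqrt_iff (Finset.sum_nonneg fun a _ => sq_nonneg (cj a)), hnorm, hnorm, hci, hcj,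
    pinv_mulVec_dotProduct_self hinv, pinv_mulVec_dotProduct_self hinv]

/-- Maximizing the rectangular volume of the extended matrix `[S, q]` over
candidate columns `q` is equivalent to maximizing the Euclidean norm of the
least-norm coefficient vector `c = Sᵀ (S Sᵀ)⁻¹ q`. -/
theorem det_append_le_iff_norm_coef_le
    (f L : ℕ) (hfL : f ≤ L) (S : Matrix (Fin f) (Fin L) ℝ) (hinv : IsUnit (S * Sᵀ))
    (qi qj : Fin f → ℝ)
    (ci cj : Fin L → ℝ)
    (hci : ci = (Sᵀ * (S * Sᵀ)⁻¹).mulVec qi)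
    (hcj : cj = (Sᵀ * (S * Sᵀ)⁻¹).mulVec qj)
    (Ti Tj : Matrix (Fin f) (Fin (L + 1)) ℝ)
    (hTi : Ti = Matrix.of fun a b => Fin.lastCases (qi a) (fun j => S a j) b)
    (hTj : Tj = Matrix.of fun a b => Fin.lastCases (qj a) (fun j => S a j) b) :
    (Ti * Tiᵀ).det ≤ (Tj * Tjᵀ).det ↔
      Real.sqrt (∑ a, ci a ^ 2) ≤ Real.sqrt (∑ a, cj a ^ 2) :=
  det_append_le_iff_norm_coef_le_general f L S hinv qi qj ci cj hci hcj Ti Tj hTi hTj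
end

section
/- Let C be a real L×m matrix with columns c₁,…,c_m, fix a column index i, and define the (L+1)×m matrix C′ whose top L×m block is C − cᵢ cᵢᵀ C/(1 + cᵢᵀ cᵢ) and whose bottom row is cᵢᵀ C/(1 + cᵢᵀ cᵢ). Then for every column index j, the squared Euclidean norm of the j-th column of C′ equals ‖cⱼ‖₂² − (cᵢᵀ cⱼ)²/(1 + cᵢᵀ cᵢ); in particular, the squared column norms never increase under this update. -/
open Matrix

/-- Rank-1 update of squared column norms, Equation (14): after the update
`C' = [I_L, cᵢ]† C`, the squared Euclidean norm of the `j`-th column becomes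
`‖cⱼ‖₂² − (cᵢᵀ cⱼ)²/(1 + cᵢᵀ cᵢ)`; in particular it never increases. -/
theorem squared_column_norms_rank_one_update
    (L m : ℕ) (C : Matrix (Fin L) (Fin m) ℝ) (i : Fin m)
    (ci : Fin L → ℝ) (hci : ci = fun a => C a i)
    (C' : Matrix (Fin (L + 1)) (Fin m) ℝ)
    (hC' : C' = Matrix.of fun b j =>
      Fin.lastCases
        ((ci ⬝ᵥ fun a => C a j) / (1 + ci ⬝ᵥ ci))
        (fun a => C a j - ci a * (ci ⬝ᵥ fun a' => C a' j) / (1 + ci ⬝ᵥ ci)) b) :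
    ∀ j : Fin m,
      (∑ b, C' b j ^ 2)
          = (∑ a, C a j ^ 2) - (ci ⬝ᵥ fun a => C a j) ^ 2 / (1 + ci ⬝ᵥ ci) ∧
        (∑ b, C' b j ^ 2) ≤ ∑ a, C a j ^ 2 := by
  intro j
  set s : ℝ := ci ⬝ᵥ fun a => C a j with hs
  set d : ℝ := 1 + ci ⬝ᵥ ci with hd
  have hd0 : 0 < d := by
    have : (0:ℝ) ≤ ci ⬝ᵥ ci := by
      simp only [dotProduct]
      exact Finset.sum_nonneg fun a _ => mul_self_nonneg _
    linarith
  have hdne : d ≠ 0 := ne_of_gt hd0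
  have hsum : (∑ b, C' b j ^ 2)
      = (∑ a, C a j ^ 2) - s ^ 2 / d := by
    subst hC'
    rw [Fin.sum_univ_castSucc]
    simp only [Matrix.of_apply, Fin.lastCases_last, Fin.lastCases_castSucc]
    have expand : ∀ a : Fin L,
        (C a j - ci a * s / d) ^ 2
          = C a j ^ 2 - 2 * (s / d) * (ci a * C a j) + (s / d) ^ 2 * (ci a * ci a) := by
      intro a; field_simp; ring
    rw [Finset.sum_congr rfl fun a _ => expand a]
    rw [Finset.sum_add_distrib, Finset.sum_sub_distrib, ← Finset.mul_sum, ← Finset.mul_sum]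
    have h1 : (∑ a, ci a * C a j) = s := rfl
    have h2 : (∑ a, ci a * ci a) = d - 1 := by
      simp [hd, dotProduct]
    rw [h1, h2]
    field_simp
    ring
  refine ⟨hsum, ?_⟩
  rw [hsum]
  have : 0 ≤ s ^ 2 / d := div_nonneg (sq_nonneg s) hd0.le
  linarith
end

section
/- Let R be a real n×m matrix, P a real f×n matrix, Q a real f×m matrix, and E a real n×m matrix with R = Pᵀ Q + E. Let k : {1,…,L₀} → {1,…,m} be a choice of column indices, let S = Q(:,k) be the f×L₀ submatrix of Q with those columns, let R(:,k) and E(:,k) be the corresponding n×L₀ column submatrices of R and E, and let C be any real L₀×m matrix with S C = Q. Then R = R(:,k) C + E − E(:,k) C. -/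
open Matrix

/-- RBMF error decomposition: if `R = Pᵀ Q + E` and `Q(:,k) C = Q`, then
`R = R(:,k) C + E − E(:,k) C`. -/
theorem rbmf_error_decomposition
    (n m f L₀ : ℕ)
    (R : Matrix (Fin n) (Fin m) ℝ)
    (P : Matrix (Fin f) (Fin n) ℝ)
    (Q : Matrix (Fin f) (Fin m) ℝ)
    (E : Matrix (Fin n) (Fin m) ℝ)
    (hR : R = Pᵀ * Q + E)
    (k : Fin L₀ → Fin m)
    (C : Matrix (Fin L₀) (Fin m) ℝ)
    (hC : Q.submatrix id k * C = Q) :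
    R = R.submatrix id k * C + E - E.submatrix id k * C := by
  have h1 : R.submatrix id k = Pᵀ * Q.submatrix id k + E.submatrix id k := by
    subst hR
    ext i j
    simp [Matrix.mul_apply, Matrix.add_apply]
  rw [h1, Matrix.add_mul, Matrix.mul_assoc, hC, hR]
  abel
end
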